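/- For the Tribonacci word, ρ(n) = 3 if and only if all factors of length n are 1-balanced pairwise, i.e., | |v|ₐ - |w|ₐ | ≤ 1 for all factors v, w of length n and all letters a ∈ {0,1,2}. -/

import Mathlib

/-- The Tribonacci morphism τ: 0↦01, 1↦02, 2↦0, extended to words. -/
def tau : List (Fin 3) → List (Fin 3) :=
  fun w => w.flatMap (fun a => if a = 0 then [0, 1] else if a = 1 then [0, 2] else [0])

/-- The Tribonacci word, the fixed point of τ starting with 0.
Since τⁿ(0) is a prefix of τⁿ⁺¹(0) and |τ^(n+1)(0)| > n, this is well defined. -/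
def trib : ℕ → Fin 3 := fun n => (tau^[n + 1] [0]).getD n 0

/-- `u` is a (finite, contiguous) factor of the Tribonacci word. -/
def IsFactor (u : List (Fin 3)) : Prop :=
  ∃ i : ℕ, u = (List.range u.length).map (fun j => trib (i + j))

noncomputable def rho (n : ℕ) : ℕ :=
  Set.ncard {v : Fin 3 → ℕ | ∃ u : List (Fin 3), IsFactor u ∧ u.length = n ∧
    ∀ a : Fin 3, u.count a = v a}

/-!
The Tribonacci word has a right special factor `u` of every length `m`: the empty word is one,
`u ↦ τ(u)0` preserves the property, and suffixes inherit it. The Parikh vectors of `u0`, `u1`,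
`u2` are the three vectors `p + e_b` with `p` the Parikh vector of `u`, so `ρ(m + 1) ≥ 3`.
Every Parikh vector `x` of length `m + 1` has coordinate sum `|p| + 1`; if `x` is balanced
against each `p + e_a` then `x ≥ p`, which forces `x = p + e_b` for some `b`. Conversely the
vectors `p + e_b` are pairwise balanced. So `ρ(m + 1) = 3` exactly when all factors of length
`m + 1` are balanced.
-/

open Finset

section ParikhVectors

variable {α : Type*} [DecidableEq α]

lemma List.count_append_singleton_eq_add_single (l : List α) (b : α) :
    (fun a => (l ++ [b]).count a) = (fun a => l.count a) + Pi.single b 1 := by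
  funext a
  by_cases h : a = b
  · subst h; simp
  · simp [Ne.symm h, h]

variable [Fintype α]

lemma List.sum_count_eq_length (l : List α) : ∑ a, l.count a = l.length := by
  simpa using Multiset.sum_count_eq_card (s := univ) (m := (l : Multiset α)) (by simp)

lemma exists_eq_add_single_of_le_of_sum_eq {p x : α → ℕ} (hle : p ≤ x)
    (hsum : ∑ a, x a = ∑ a, p a + 1) : ∃ b, x = p + Pi.single b 1 := by
  obtain ⟨b, -, hb⟩ := exists_lt_of_sum_lt (s := univ) (f := p) (g := x) (by omega)
  have hle' : ∀ a ∈ univ, (p + Pi.single b 1 : α → ℕ) a ≤ x a := by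
    intro a _
    by_cases h : a = b
    · subst h; simpa using hb
    · simpa [h] using hle a
  have hsum' : ∑ a, (p + Pi.single b 1 : α → ℕ) a = ∑ a, x a := by
    simp [sum_add_distrib, hsum]
  exact ⟨b, funext fun a => ((sum_eq_sum_iff_of_le hle').1 hsum' a (mem_univ a)).symm⟩

lemma ncard_range_add_single (p : α → ℕ) :
    (Set.range fun b => p + Pi.single b 1).ncard = Fintype.card α := by
  rw [Set.ncard_range_of_injective, Nat.card_eq_fintype_card]
  intro b c h
  by_contra hbc
  simpa [hbc] using congrFun h b

variable {S : Set (α → ℕ)} {p : α → ℕ}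

lemma finite_of_forall_sum_eq (hsum : ∀ x ∈ S, ∑ a, x a = ∑ a, p a + 1) : S.Finite :=
  (Set.finite_Iic fun _ => ∑ a, p a + 1).subset fun x hx a =>
    hsum x hx ▸ single_le_sum (fun _ _ => Nat.zero_le _) (mem_univ a)

lemma eq_range_add_single_iff_balanced (hsum : ∀ x ∈ S, ∑ a, x a = ∑ a, p a + 1)
    (hsub : ∀ b, p + Pi.single b 1 ∈ S) :
    S = Set.range (fun b => p + Pi.single b 1) ↔
      ∀ x ∈ S, ∀ y ∈ S, ∀ a, |(x a : ℤ) - y a| ≤ 1 := by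
  constructor
  · rintro rfl _ ⟨b, rfl⟩ _ ⟨c, rfl⟩ a
    simp only [Pi.add_apply, Pi.single_apply]
    split_ifs <;> simp
  · intro hbal
    refine (Set.range_subset_iff.2 hsub).antisymm' fun x hx => ?_
    have hle : p ≤ x := by
      intro a
      have := (abs_le.1 (hbal _ (hsub a) x hx a)).2
      simp only [Pi.add_apply, Pi.single_eq_same, Nat.cast_add, Nat.cast_one] at this
      show p a ≤ x a
      omega
    exact exists_eq_add_single_of_le_of_sum_eq hle (hsum x hx) |>.imp fun _ => Eq.symm

lemma ncard_eq_card_iff_balanced (hsum : ∀ x ∈ S, ∑ a, x a = ∑ a, p a + 1)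
    (hsub : ∀ b, p + Pi.single b 1 ∈ S) :
    S.ncard = Fintype.card α ↔ ∀ x ∈ S, ∀ y ∈ S, ∀ a, |(x a : ℤ) - y a| ≤ 1 := by
  rw [← eq_range_add_single_iff_balanced hsum hsub, ← ncard_range_add_single p]
  refine ⟨fun h => ?_, fun h => h ▸ rfl⟩
  exact (Set.eq_of_subset_of_ncard_le (Set.range_subset_iff.2 hsub) h.le
    (finite_of_forall_sum_eq hsum)).symm

end ParikhVectors

lemma tau_append (u v : List (Fin 3)) : tau (u ++ v) = tau u ++ tau v :=
  List.flatMap_append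

lemma iterate_tau_append (k : ℕ) (u v : List (Fin 3)) :
    tau^[k] (u ++ v) = tau^[k] u ++ tau^[k] v := by
  induction k generalizing u v with
  | zero => rfl
  | succ k ih => simp only [Function.iterate_succ_apply, tau_append, ih]

lemma tau_singleton_eq_cons_zero (a : Fin 3) : ∃ r, tau [a] = 0 :: r := by
  fin_cases a
  exacts [⟨[1], rfl⟩, ⟨[2], rfl⟩, ⟨[], rfl⟩]

lemma length_le_length_tau (u : List (Fin 3)) : u.length ≤ (tau u).length := by
  induction u with
  | nil => rfl
  | cons a u ih =>
    obtain ⟨r, hr⟩ := tau_singleton_eq_cons_zero a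
    rw [show a :: u = [a] ++ u from rfl, tau_append, hr]
    simp only [List.length_append, List.length_cons, List.length_nil]
    omega

lemma length_le_length_iterate_tau (k : ℕ) (u : List (Fin 3)) :
    u.length ≤ (tau^[k] u).length := by
  induction k with
  | zero => rfl
  | succ k ih =>
    rw [Function.iterate_succ_apply']
    exact ih.trans (length_le_length_tau _)

def tribPrefix (k : ℕ) : List (Fin 3) := tau^[k] [0]

lemma tribPrefix_succ (k : ℕ) : tribPrefix (k + 1) = tribPrefix k ++ tau^[k] [1] := by
  rw [tribPrefix, Function.iterate_succ_apply, show tau [0] = [0] ++ [1] from rfl,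
    iterate_tau_append, tribPrefix]

lemma tribPrefix_isPrefix {k m : ℕ} (h : k ≤ m) : tribPrefix k <+: tribPrefix m := by
  induction m, h using Nat.le_induction with
  | base => exact List.prefix_refl _
  | succ m _ ih => exact ih.trans ⟨_, (tribPrefix_succ m).symm⟩

lemma lt_length_tribPrefix (k : ℕ) : k < (tribPrefix k).length := by
  induction k with
  | zero => simp [tribPrefix]
  | succ k ih =>
    have := length_le_length_iterate_tau k [1]
    rw [tribPrefix_succ, List.length_append]
    simp only [List.length_singleton] at this
    omega

lemma trib_eq_getElem {n k : ℕ} (h : n < (tribPrefix k).length) :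
    trib n = (tribPrefix k)[n] := by
  have hn : n < (tribPrefix (n + 1)).length := (Nat.lt_succ_self n).trans (lt_length_tribPrefix _)
  rw [trib, ← tribPrefix, List.getD_eq_getElem _ _ hn]
  rcases le_total k (n + 1) with hk | hk
  · exact ((tribPrefix_isPrefix hk).getElem h).symm
  · exact (tribPrefix_isPrefix hk).getElem hn

lemma isFactor_iff_exists_isInfix (u : List (Fin 3)) :
    IsFactor u ↔ ∃ k, u <:+: tribPrefix k := by
  constructor
  · rintro ⟨i, hi⟩
    obtain ⟨k, hk⟩ : ∃ k, i + u.length < (tribPrefix k).length :=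
      ⟨_, lt_length_tribPrefix _⟩
    refine ⟨k, ?_⟩
    have hu : ((tribPrefix k).drop i).take u.length = u := by
      refine List.ext_getElem (by simp; omega) fun j _ hj => ?_
      rw [List.getElem_of_eq hi hj, List.getElem_map, List.getElem_range,
        trib_eq_getElem (k := k) (by omega)]
      simp
    rw [← hu]
    exact (List.take_prefix _ _).isInfix.trans (List.drop_suffix _ _).isInfix
  · rintro ⟨k, s, t, hst⟩
    refine ⟨s.length, List.ext_getElem (by simp) fun j h₁ _ => ?_⟩
    have hj : s.length + j < (tribPrefix k).length := by rw [← hst]; simp; omega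
    rw [List.getElem_map, List.getElem_range, trib_eq_getElem hj, List.getElem_of_eq hst.symm hj]
    simp [h₁]

lemma IsFactor.of_isInfix {u v : List (Fin 3)} (hu : IsFactor u) (hv : v <:+: u) :
    IsFactor v := by
  rw [isFactor_iff_exists_isInfix] at hu ⊢
  exact hu.imp fun _ => hv.trans

lemma IsFactor.tau {u : List (Fin 3)} (hu : IsFactor u) : IsFactor (tau u) := by
  rw [isFactor_iff_exists_isInfix] at hu ⊢
  obtain ⟨k, s, t, hst⟩ := hu
  refine ⟨k + 1, _root_.tau s, _root_.tau t, ?_⟩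
  rw [tribPrefix, Function.iterate_succ_apply', ← tribPrefix, ← hst, tau_append, tau_append]

lemma IsFactor.exists_append_singleton {u : List (Fin 3)} (hu : IsFactor u) :
    ∃ a, IsFactor (u ++ [a]) := by
  obtain ⟨i, hi⟩ := hu
  refine ⟨trib (i + u.length), i, ?_⟩
  rw [List.length_append, List.length_singleton, List.range_succ, List.map_append, ← hi]
  rfl

def IsRightSpecial (u : List (Fin 3)) : Prop := ∀ a, IsFactor (u ++ [a])

lemma isRightSpecial_nil : IsRightSpecial [] := by
  intro a
  fin_cases a
  exacts [⟨0, by decide⟩, ⟨1, by decide⟩, ⟨3, by decide⟩]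

-- `τ(u2b) = τ(u)0τ(b)` where `τ(b)` starts with `0`, `τ(u0) = τ(u)01` and `τ(u1) = τ(u)02`.
lemma IsRightSpecial.tau_append_zero {u : List (Fin 3)} (hu : IsRightSpecial u) :
    IsRightSpecial (tau u ++ [0]) := by
  intro a
  fin_cases a
  · obtain ⟨b, hb⟩ := (hu 2).exists_append_singleton
    obtain ⟨r, hr⟩ := tau_singleton_eq_cons_zero b
    refine hb.tau.of_isInfix (List.IsPrefix.isInfix ⟨r, ?_⟩)
    rw [tau_append, tau_append, hr]
    simp [tau]
  · simpa [tau_append, tau] using (hu 0).tau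
  · simpa [tau_append, tau] using (hu 1).tau

lemma IsRightSpecial.of_isSuffix {u v : List (Fin 3)} (hu : IsRightSpecial u) (hv : v <:+ u) :
    IsRightSpecial v := by
  obtain ⟨t, rfl⟩ := hv
  exact fun a => (hu a).of_isInfix ⟨t, [], by simp⟩

lemma exists_isRightSpecial_length (m : ℕ) : ∃ u, IsRightSpecial u ∧ u.length = m := by
  suffices ∃ u, IsRightSpecial u ∧ m ≤ u.length by
    obtain ⟨u, hu, hm⟩ := this
    exact ⟨u.drop (u.length - m), hu.of_isSuffix (List.drop_suffix _ _), by simp; omega⟩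
  induction m with
  | zero => exact ⟨[], isRightSpecial_nil, le_rfl⟩
  | succ m ih =>
    obtain ⟨u, hu, hm⟩ := ih
    refine ⟨tau u ++ [0], hu.tau_append_zero, ?_⟩
    simpa using hm.trans (length_le_length_tau u)

theorem tribonacci_rho_three_iff_balanced (n : ℕ) (hn : 1 ≤ n) :
    rho n = 3 ↔
      ∀ v w : List (Fin 3), IsFactor v → IsFactor w →
        v.length = n → w.length = n →
        ∀ a : Fin 3, |(v.count a : ℤ) - (w.count a : ℤ)| ≤ 1 := by
  obtain ⟨u, hu, hlen⟩ := exists_isRightSpecial_length (n - 1)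
  unfold rho
  set S : Set (Fin 3 → ℕ) :=
    {v | ∃ w : List (Fin 3), IsFactor w ∧ w.length = n ∧ ∀ a, w.count a = v a}
  have hsum : ∀ x ∈ S, ∑ a, x a = ∑ a, u.count a + 1 := by
    rintro x ⟨w, -, hw, hx⟩
    simp only [← hx, List.sum_count_eq_length, hw, hlen]
    omega
  have hsub : ∀ b, (fun a => u.count a) + Pi.single b 1 ∈ S := fun b =>
    ⟨u ++ [b], hu b, by simp; omega,
      congrFun (List.count_append_singleton_eq_add_single u b)⟩
  have hbal := ncard_eq_card_iff_balanced hsum hsub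
  rw [Fintype.card_fin] at hbal
  rw [hbal]
  constructor
  · intro h v w hv hw hvn hwn a
    exact h _ ⟨v, hv, hvn, fun _ => rfl⟩ _ ⟨w, hw, hwn, fun _ => rfl⟩ a
  · rintro h x ⟨v, hv, hvn, hx⟩ y ⟨w, hw, hwn, hy⟩ a
    rw [← hx, ← hy]
    exact h v w hv hw hvn hwn a
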